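/- For every nonnegative integer s and all 1 ≤ k ≤ n, [A^s]_{k,n} = (a_k/a_n)·(1/k!)·(d/dt)^n_{t=0}[ (φ^⟨s⟩(t))^k · ∏_{i=0}^{s-1} g(φ^⟨i⟩(t)) ], where the empty product (s = 0) equals 1. -/

import Mathlib

open PowerSeries Finset

noncomputable section

/-- Product of two infinite matrices of complex numbers (indexed by positive integers,
upper triangular): `[A·B]_{k,n} = ∑_{j=k}^{n} [A]_{k,j}·[B]_{j,n}`. -/
def triMul (A B : ℕ → ℕ → ℂ) : ℕ → ℕ → ℂ :=
  fun k n => ∑ j ∈ Finset.Icc k n, A k j * B j n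

/-- The identity matrix. -/
def triId : ℕ → ℕ → ℂ := fun k n => if k = n then 1 else 0

/-- Powers of a matrix: `A^0 = I`, `A^{s+1} = A^s · A`. -/
def triPow (A : ℕ → ℕ → ℂ) : ℕ → ℕ → ℕ → ℂ
  | 0 => triId
  | s + 1 => triMul (triPow A s) A

/-- Composition `F ∘ G` of formal power series (intended for `G` with zero
constant coefficient): the coefficient of `t^n` is `∑_{j=0}^{n} F_j · [t^n](G^j)`. -/
def psComp (F G : PowerSeries ℂ) : PowerSeries ℂ :=
  PowerSeries.mk fun n =>
    ∑ j ∈ Finset.range (n + 1), (PowerSeries.coeff j F) * (PowerSeries.coeff n (G ^ j))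

/-- Iterated composition: `φ^⟨0⟩ = t`, `φ^⟨s+1⟩ = φ^⟨s⟩ ∘ φ`. -/
def iterComp (φ : PowerSeries ℂ) : ℕ → PowerSeries ℂ
  | 0 => PowerSeries.X
  | s + 1 => psComp (iterComp φ s) φ

/-! `B_{j,n} = [t^n](φ^j g)` is the matrix, in the monomial basis, of the weighted composition
operator `F ↦ (F ∘ φ) · g`, so `B^s` is the matrix of its `s`-th iterate, which sends `t^k` to
`(φ^⟨s⟩)^k ∏_{i<s} g ∘ φ^⟨i⟩`. The matrix `A` is `B` conjugated by `diag(a_k / k!)`, hence so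
are their powers. -/

lemma coeff_pow_of_lt {R : Type*} [CommRing R] {φ : R⟦X⟧} (hφ : constantCoeff φ = 0)
    {j n : ℕ} (h : n < j) : coeff n (φ ^ j) = 0 :=
  X_pow_dvd_iff.mp (pow_dvd_pow_of_dvd (X_dvd_iff.mpr hφ) j) n h

lemma coeff_psComp_eq_sum_range {F φ : ℂ⟦X⟧} (hφ : constantCoeff φ = 0) {m N : ℕ}
    (hmN : m ≤ N) :
    coeff m (psComp F φ) = ∑ j ∈ range (N + 1), coeff j F * coeff m (φ ^ j) := by
  rw [psComp, coeff_mk]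
  refine sum_subset (range_subset_range.mpr (by omega)) fun j _ hj => ?_
  rw [coeff_pow_of_lt hφ (by simpa using hj), mul_zero]

lemma psComp_eq_subst (F : ℂ⟦X⟧) {G : ℂ⟦X⟧} (hG : constantCoeff G = 0) :
    psComp F G = F.subst G := by
  ext n
  rw [coeff_subst' (HasSubst.of_constantCoeff_zero' hG), psComp, coeff_mk,
    finsum_eq_sum_of_support_subset (s := range (n + 1))]
  · rfl
  · intro j hj
    by_contra hjn
    exact hj (by dsimp only; rw [coeff_pow_of_lt hG (by simpa using hjn), smul_zero])

lemma constantCoeff_psComp (F G : ℂ⟦X⟧) : constantCoeff (psComp F G) = constantCoeff F := by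
  simp only [← coeff_zero_eq_constantCoeff_apply, psComp, coeff_mk, zero_add, range_one,
    sum_singleton, pow_zero, coeff_one, if_true, mul_one]

lemma constantCoeff_iterComp (φ : ℂ⟦X⟧) (s : ℕ) : constantCoeff (iterComp φ s) = 0 := by
  induction s with
  | zero => exact constantCoeff_X
  | succ s ih => rw [iterComp, constantCoeff_psComp, ih]

lemma iterComp_succ_eq_subst {φ : ℂ⟦X⟧} (hφ : constantCoeff φ = 0) (s : ℕ) :
    iterComp φ (s + 1) = (iterComp φ s).subst φ :=
  psComp_eq_subst _ hφ

def weightedComp (φ g F : ℂ⟦X⟧) : ℂ⟦X⟧ := psComp F φ * g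

lemma coeff_weightedComp {φ : ℂ⟦X⟧} (hφ : constantCoeff φ = 0) (g F : ℂ⟦X⟧) (n : ℕ) :
    coeff n (weightedComp φ g F) =
      ∑ j ∈ range (n + 1), coeff j F * coeff n (φ ^ j * g) := by
  rw [weightedComp, coeff_mul]
  have hcomp : ∀ p ∈ antidiagonal n, coeff p.1 (psComp F φ) * coeff p.2 g =
      ∑ j ∈ range (n + 1), coeff j F * (coeff p.1 (φ ^ j) * coeff p.2 g) := by
    intro p hp
    rw [coeff_psComp_eq_sum_range hφ (Finset.HasAntidiagonal.antidiagonal.fst_le hp), sum_mul]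
    exact sum_congr rfl fun j _ => mul_assoc _ _ _
  simp only [sum_congr rfl hcomp, coeff_mul, mul_sum]
  exact sum_comm

lemma X_pow_dvd_weightedComp {φ : ℂ⟦X⟧} (hφ : constantCoeff φ = 0) (g : ℂ⟦X⟧) {k : ℕ}
    {F : ℂ⟦X⟧} (hF : X ^ k ∣ F) : X ^ k ∣ weightedComp φ g F := by
  have hsub := HasSubst.of_constantCoeff_zero' hφ
  obtain ⟨Q, rfl⟩ := hF
  rw [weightedComp, psComp_eq_subst _ hφ, subst_mul hsub, subst_pow hsub, subst_X hsub, mul_assoc]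
  exact (pow_dvd_pow_of_dvd (X_dvd_iff.mpr hφ) k).mul_right _

lemma weightedComp_iterate_X_pow {φ : ℂ⟦X⟧} (hφ : constantCoeff φ = 0) (g : ℂ⟦X⟧) (s k : ℕ) :
    (weightedComp φ g)^[s] (X ^ k) =
      iterComp φ s ^ k * ∏ i ∈ range s, psComp g (iterComp φ i) := by
  have hsub := HasSubst.of_constantCoeff_zero' hφ
  induction s with
  | zero => simp [iterComp]
  | succ s ih =>
    have hshift (i : ℕ) :
        (psComp g (iterComp φ i)).subst φ = psComp g (iterComp φ (i + 1)) := by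
      have hi := constantCoeff_iterComp φ i
      rw [psComp_eq_subst _ hi, psComp_eq_subst _ (constantCoeff_iterComp φ _),
        iterComp_succ_eq_subst hφ, subst_comp_subst_apply (HasSubst.of_constantCoeff_zero' hi) hsub]
    rw [Function.iterate_succ_apply', ih, weightedComp, psComp_eq_subst _ hφ, subst_mul hsub,
      subst_pow hsub, ← coe_substAlgHom hsub, map_prod, coe_substAlgHom, prod_range_succ' _ s,
      ← iterComp_succ_eq_subst hφ, mul_assoc]
    simp only [hshift, iterComp, psComp_eq_subst g (constantCoeff_X), X_subst]

lemma triPow_conj (c : ℕ → ℂ) (hc : ∀ n, 1 ≤ n → c n ≠ 0) {A B : ℕ → ℕ → ℂ}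
    (hAB : ∀ k n, 1 ≤ k → k ≤ n → A k n = c k / c n * B k n) (s : ℕ) {k n : ℕ}
    (hk : 1 ≤ k) (hkn : k ≤ n) : triPow A s k n = c k / c n * triPow B s k n := by
  induction s generalizing n with
  | zero =>
    by_cases hkn' : k = n
    · subst hkn'
      simp [triPow, triId, hc k hk]
    · simp [triPow, triId, hkn']
  | succ s ih =>
    simp only [triPow, triMul, mul_sum]
    refine sum_congr rfl fun j hj => ?_
    obtain ⟨hkj, hjn⟩ := mem_Icc.mp hj
    rw [ih hkj, hAB j n (hk.trans hkj) hjn]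
    field_simp [hc j (hk.trans hkj)]

lemma triPow_eq_coeff_weightedComp_iterate {φ : ℂ⟦X⟧} (hφ : constantCoeff φ = 0) (g : ℂ⟦X⟧)
    (s k n : ℕ) :
    triPow (fun j n => coeff n (φ ^ j * g)) s k n =
      coeff n ((weightedComp φ g)^[s] (X ^ k)) := by
  induction s generalizing n with
  | zero => simp [triPow, triId, coeff_X_pow, eq_comm]
  | succ s ih =>
    have hlow : ∀ j < k, coeff j ((weightedComp φ g)^[s] (X ^ k)) = 0 :=
      X_pow_dvd_iff.mp
        (Function.Iterate.rec (X ^ k ∣ ·) dvd_rfl (fun _ => X_pow_dvd_weightedComp hφ g) s)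
    rw [Function.iterate_succ_apply', coeff_weightedComp hφ, triPow, triMul]
    simp only [ih]
    refine sum_subset (fun j hj => ?_) fun j hj hjk => ?_
    · rw [mem_range]
      exact Nat.lt_succ_of_le (mem_Icc.mp hj).2
    · rw [mem_range] at hj
      rw [mem_Icc] at hjk
      rw [hlow j (by omega), zero_mul]

theorem stmt5_general (a : ℕ → ℂ) (ha : ∀ n, 1 ≤ n → a n ≠ 0)
    (φ g : PowerSeries ℂ)
    (hφ0 : constantCoeff φ = 0)
    (A : ℕ → ℕ → ℂ)
    (hA : ∀ k n, 1 ≤ k → k ≤ n →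
      A k n = a k / a n * (1 / k.factorial) *
        ((n.factorial : ℂ) * coeff n (φ ^ k * g)))
    (s : ℕ) (k n : ℕ) (hk : 1 ≤ k) (hkn : k ≤ n) :
    triPow A s k n = a k / a n * (1 / k.factorial) *
      ((n.factorial : ℂ) * coeff n ((iterComp φ s) ^ k *
        ∏ i ∈ Finset.range s, psComp g (iterComp φ i))) := by
  have hfac (m : ℕ) : (m.factorial : ℂ) ≠ 0 := Nat.cast_ne_zero.mpr m.factorial_ne_zero
  have hc : ∀ m, 1 ≤ m → a m / m.factorial ≠ 0 := fun m hm => div_ne_zero (ha m hm) (hfac m)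
  have hAc : ∀ k n, 1 ≤ k → k ≤ n →
      A k n = a k / k.factorial / (a n / n.factorial) * coeff n (φ ^ k * g) := by
    intro k n hk hkn
    rw [hA k n hk hkn]
    field_simp [ha n (hk.trans hkn), hfac]
  rw [triPow_conj _ hc hAc s hk hkn, triPow_eq_coeff_weightedComp_iterate hφ0,
    weightedComp_iterate_X_pow hφ0]
  field_simp [ha n (hk.trans hkn), hfac]

/-- Corollary (h = 1): the `s`-th power of the matrix with entries
`[A]_{k,n} = (a_k/a_n)·(1/k!)·(d/dt)^n_{t=0}[φ(t)^k·g(t)]` has entries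
`[A^s]_{k,n} = (a_k/a_n)·(1/k!)·(d/dt)^n_{t=0}[(φ^⟨s⟩(t))^k·∏_{i=0}^{s-1} g(φ^⟨i⟩(t))]`. -/
theorem stmt5 (a : ℕ → ℂ) (ha : ∀ n, 1 ≤ n → a n ≠ 0)
    (φ g : PowerSeries ℂ)
    (hφ0 : constantCoeff φ = 0)
    (A : ℕ → ℕ → ℂ)
    (hAtri : ∀ k n, n < k → A k n = 0)
    (hA : ∀ k n, 1 ≤ k → k ≤ n →
      A k n = a k / a n * (1 / k.factorial) *
        ((n.factorial : ℂ) * coeff n (φ ^ k * g)))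
    (s : ℕ) (k n : ℕ) (hk : 1 ≤ k) (hkn : k ≤ n) :
    triPow A s k n = a k / a n * (1 / k.factorial) *
      ((n.factorial : ℂ) * coeff n ((iterComp φ s) ^ k *
        ∏ i ∈ Finset.range s, psComp g (iterComp φ i))) :=
  stmt5_general a ha φ g hφ0 A hA s k n hk hkn
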